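/- arXiv:1709.07317 — 2 statements merged into one kernel-verified Lean document; each statement's English description precedes it below -/
import Mathlib

section
/- If Γ' is a sublattice of Γ ⊆ ℝ^d of index m and R ∈ OS(Γ) = OS(Γ'), then m·Scal_Γ(R) ⊆ Scal_{Γ'}(R) ⊆ (1/m)·Scal_Γ(R). Consequently, m·den_Γ(R)/den_{Γ'}(R) ∈ ℕ and m·den_{Γ'}(R)/den_Γ(R) ∈ ℕ. -/
noncomputable section

abbrev Euc (d : ℕ) : Type := EuclideanSpace ℝ (Fin d)

/-- Γ is a (full-rank) lattice in ℝ^d: the ℤ-span of an ℝ-basis of ℝ^d. -/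
def IsLattice {d : ℕ} (Γ : AddSubgroup (Euc d)) : Prop :=
  ∃ b : Module.Basis (Fin d) ℝ (Euc d),
    Γ = (Submodule.span ℤ (Set.range ⇑b)).toAddSubgroup

/-- Two subgroups are commensurate if their intersection has finite index in both. -/
def Commensurate {d : ℕ} (Γ₁ Γ₂ : AddSubgroup (Euc d)) : Prop :=
  ((Γ₁ ⊓ Γ₂).addSubgroupOf Γ₁).FiniteIndex ∧ ((Γ₁ ⊓ Γ₂).addSubgroupOf Γ₂).FiniteIndex

/-- The image α·R(Γ) of Γ under the similarity transformation αR. -/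
def simMap {d : ℕ} (α : ℝ) (R : Euc d ≃ₗᵢ[ℝ] Euc d) (Γ : AddSubgroup (Euc d)) :
    AddSubgroup (Euc d) :=
  Γ.map (α • R.toLinearEquiv.toLinearMap).toAddMonoidHom

/-- The image R(Γ). -/
def rotMap {d : ℕ} (R : Euc d ≃ₗᵢ[ℝ] Euc d) (Γ : AddSubgroup (Euc d)) :
    AddSubgroup (Euc d) :=
  Γ.map R.toLinearEquiv.toLinearMap.toAddMonoidHom

/-- The set of similarity isometries of Γ. -/
def OSset {d : ℕ} (Γ : AddSubgroup (Euc d)) : Set (Euc d ≃ₗᵢ[ℝ] Euc d) :=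
  {R | ∃ α : ℝ, 0 < α ∧ simMap α R Γ ≤ Γ}

/-- The set of scaling factors of R, Scal_Γ(R) = {α : αRΓ ⊆ Γ}. -/
def Scal {d : ℕ} (Γ : AddSubgroup (Euc d)) (R : Euc d ≃ₗᵢ[ℝ] Euc d) : Set ℝ :=
  {α | simMap α R Γ ≤ Γ}

/-- δ is the denominator of R: the smallest positive element of Scal Γ R. -/
def IsDen {d : ℕ} (Γ : AddSubgroup (Euc d)) (R : Euc d ≃ₗᵢ[ℝ] Euc d) (δ : ℝ) : Prop :=
  0 < δ ∧ δ ∈ Scal Γ R ∧ ∀ β : ℝ, 0 < β → β ∈ Scal Γ R → δ ≤ β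

/-- The set of coincidence isometries of Γ. -/
def OCset {d : ℕ} (Γ : AddSubgroup (Euc d)) : Set (Euc d ≃ₗᵢ[ℝ] Euc d) :=
  {R | Commensurate Γ (rotMap R Γ)}

/-- The coincidence index Σ_Γ(R) = [Γ : Γ ∩ RΓ]. -/
def coinIndex {d : ℕ} (Γ : AddSubgroup (Euc d)) (R : Euc d ≃ₗᵢ[ℝ] Euc d) : ℕ :=
  (rotMap R Γ).relIndex Γ

/-- The coincidence site lattice Γ(R) = Γ ∩ RΓ. -/
def CSL {d : ℕ} (Γ : AddSubgroup (Euc d)) (R : Euc d ≃ₗᵢ[ℝ] Euc d) :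
    AddSubgroup (Euc d) :=
  Γ ⊓ rotMap R Γ

/-- The dual lattice Γ* = {x : ⟨x,y⟩ ∈ ℤ for all y ∈ Γ}. -/
def dualLattice {d : ℕ} (Γ : AddSubgroup (Euc d)) : AddSubgroup (Euc d) where
  carrier := {x | ∀ y ∈ Γ, ∃ n : ℤ, (inner ℝ x y : ℝ) = (n : ℝ)}
  zero_mem' := by
    intro y hy
    exact ⟨0, by simp⟩
  add_mem' := by
    intro a b ha hb y hy
    obtain ⟨n, hn⟩ := ha y hy
    obtain ⟨m, hm⟩ := hb y hy
    exact ⟨n + m, by rw [inner_add_left, hn, hm]; push_cast; ring⟩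
  neg_mem' := by
    intro a ha y hy
    obtain ⟨n, hn⟩ := ha y hy
    exact ⟨-n, by rw [inner_neg_left, hn]; push_cast; ring⟩

/-!
Multiplication by `m = [Γ : Γ']` maps `Γ` into `Γ'`, which gives both inclusions between the
scaling sets. Each `Scal` is an additive subgroup of `ℝ`, hence cyclic, generated by its least
positive element; so the positive elements `m δ ∈ Scal Γ' R` and `m δ' ∈ Scal Γ R` are positive
multiples of `δ'` and `δ` respectively.
-/

lemma mem_scal_iff {d : ℕ} {Γ : AddSubgroup (Euc d)} {R : Euc d ≃ₗᵢ[ℝ] Euc d} {α : ℝ} :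
    α ∈ Scal Γ R ↔ ∀ x ∈ Γ, α • R x ∈ Γ := by
  simp [Scal, simMap, SetLike.le_def]

def scalAddSubgroup {d : ℕ} (Γ : AddSubgroup (Euc d)) (R : Euc d ≃ₗᵢ[ℝ] Euc d) :
    AddSubgroup ℝ where
  carrier := Scal Γ R
  zero_mem' := mem_scal_iff.mpr fun _ _ => by simp
  add_mem' {α β} hα hβ := mem_scal_iff.mpr fun x hx => by
    rw [add_smul]
    exact add_mem (mem_scal_iff.mp hα x hx) (mem_scal_iff.mp hβ x hx)
  neg_mem' {α} hα := mem_scal_iff.mpr fun x hx => by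
    rw [neg_smul]
    exact neg_mem (mem_scal_iff.mp hα x hx)

lemma AddSubgroup.exists_pos_nsmul_eq_of_isLeast {G : Type*} [AddCommGroup G] [LinearOrder G]
    [IsOrderedAddMonoid G] [Archimedean G] {H : AddSubgroup G} {a b : G}
    (ha : IsLeast {g | g ∈ H ∧ 0 < g} a) (hb : b ∈ H) (hb0 : 0 < b) :
    ∃ k : ℕ, 0 < k ∧ b = k • a := by
  rw [AddSubgroup.cyclic_of_min ha, AddSubgroup.mem_closure_singleton] at hb
  obtain ⟨n, rfl⟩ := hb
  have hn : 0 < n := by rwa [← zsmul_lt_zsmul_iff_left ha.1.2, zero_zsmul]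
  exact ⟨n.toNat, by omega, by rw [← natCast_zsmul, Int.toNat_of_nonneg hn.le]⟩

lemma IsDen.exists_pos_nat_mul_eq {d : ℕ} {Γ : AddSubgroup (Euc d)} {R : Euc d ≃ₗᵢ[ℝ] Euc d}
    {δ β : ℝ} (hδ : IsDen Γ R δ) (hβ : β ∈ Scal Γ R) (hβ0 : 0 < β) :
    ∃ k : ℕ, 0 < k ∧ β = k * δ := by
  have hleast : IsLeast {g | g ∈ scalAddSubgroup Γ R ∧ 0 < g} δ :=
    ⟨⟨hδ.2.1, hδ.1⟩, fun β hβ => hδ.2.2 β hβ.2 hβ.1⟩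
  simpa only [nsmul_eq_mul] using
    AddSubgroup.exists_pos_nsmul_eq_of_isLeast (H := scalAddSubgroup Γ R) hleast hβ hβ0

section Sublattice

variable {d : ℕ} {Γ Γ' : AddSubgroup (Euc d)} {R : Euc d ≃ₗᵢ[ℝ] Euc d} {α : ℝ}

lemma relIndex_mul_mem_scal_sublattice_of_mem_scal (hsub : Γ' ≤ Γ) (hα : α ∈ Scal Γ R) :
    (Γ'.relIndex Γ : ℝ) * α ∈ Scal Γ' R := mem_scal_iff.mpr fun x hx => by
  rw [mul_smul, Nat.cast_smul_eq_nsmul]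
  exact Γ'.nsmul_relIndex_mem (mem_scal_iff.mp hα x (hsub hx))

lemma relIndex_mul_mem_scal_of_mem_scal_sublattice (hsub : Γ' ≤ Γ) (hα : α ∈ Scal Γ' R) :
    (Γ'.relIndex Γ : ℝ) * α ∈ Scal Γ R := mem_scal_iff.mpr fun x hx => by
  rw [mul_comm, mul_smul, Nat.cast_smul_eq_nsmul, ← map_nsmul]
  exact hsub (mem_scal_iff.mp hα _ (Γ'.nsmul_relIndex_mem hx))

end Sublattice

theorem scal_sublattice_comparison_general {d : ℕ} (Γ Γ' : AddSubgroup (Euc d))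
    (hsub : Γ' ≤ Γ)
    (m : ℕ) (hm : Γ'.relIndex Γ = m) (hm0 : 0 < m)
    (R : Euc d ≃ₗᵢ[ℝ] Euc d) :
    (∀ α ∈ Scal Γ R, (m : ℝ) * α ∈ Scal Γ' R) ∧
    (∀ α ∈ Scal Γ' R, (m : ℝ) * α ∈ Scal Γ R) ∧
    (∀ δ δ' : ℝ, IsDen Γ R δ → IsDen Γ' R δ' →
      (∃ k : ℕ, 0 < k ∧ (m : ℝ) * δ = (k : ℝ) * δ') ∧
      (∃ k : ℕ, 0 < k ∧ (m : ℝ) * δ' = (k : ℝ) * δ)) := by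
  subst hm
  have hm0' : (0 : ℝ) < Γ'.relIndex Γ := by exact_mod_cast hm0
  refine ⟨fun _ => relIndex_mul_mem_scal_sublattice_of_mem_scal hsub,
    fun _ => relIndex_mul_mem_scal_of_mem_scal_sublattice hsub, fun δ δ' hδ hδ' => ⟨?_, ?_⟩⟩
  · exact hδ'.exists_pos_nat_mul_eq (relIndex_mul_mem_scal_sublattice_of_mem_scal hsub hδ.2.1)
      (mul_pos hm0' hδ.1)
  · exact hδ.exists_pos_nat_mul_eq (relIndex_mul_mem_scal_of_mem_scal_sublattice hsub hδ'.2.1)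
      (mul_pos hm0' hδ'.1)

theorem scal_sublattice_comparison {d : ℕ} (Γ Γ' : AddSubgroup (Euc d))
    (hΓ : IsLattice Γ) (hΓ' : IsLattice Γ') (hsub : Γ' ≤ Γ)
    (m : ℕ) (hm : Γ'.relIndex Γ = m) (hm0 : 0 < m)
    (R : Euc d ≃ₗᵢ[ℝ] Euc d) :
    (∀ α ∈ Scal Γ R, (m : ℝ) * α ∈ Scal Γ' R) ∧
    (∀ α ∈ Scal Γ' R, (m : ℝ) * α ∈ Scal Γ R) ∧
    (∀ δ δ' : ℝ, IsDen Γ R δ → IsDen Γ' R δ' →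
      (∃ k : ℕ, 0 < k ∧ (m : ℝ) * δ = (k : ℝ) * δ') ∧
      (∃ k : ℕ, 0 < k ∧ (m : ℝ) * δ' = (k : ℝ) * δ)) :=
  scal_sublattice_comparison_general Γ Γ' hsub m hm hm0 R
end
end

section
/- Let Γ ⊆ ℝ^d be a lattice and Γ* = {x ∈ ℝ^d : ⟨x,y⟩ ∈ ℤ for all y ∈ Γ} its dual lattice. Then OS(Γ) = OS(Γ*) and Scal_{Γ*}(R) = Scal_Γ(R⁻¹) for all R ∈ OS(Γ); in particular den_{Γ*}(R) = den_Γ(R⁻¹). -/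
noncomputable section

/-!
Duality: `⟨αR x, y⟩ = ⟨x, αR⁻¹ y⟩`, so `αR⁻¹Γ ⊆ Γ` gives `αRΓ* ⊆ Γ*`; applied to `Γ*` and `R⁻¹`,
biduality `Γ** = Γ` yields the converse, hence `Scal_{Γ*}(R) = Scal_Γ(R⁻¹)`.
For `OS(Γ*) = OS(Γ)` it remains to see that `OS(Γ)` is closed under inversion: if `αRΓ ⊆ Γ`,
then `αR` is an injective endomorphism of `Γ ≅ ℤ^d`, so its image has some finite index `n`,
whence `nΓ ⊆ αRΓ`, i.e. `(n/α)R⁻¹Γ ⊆ Γ`.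
-/

open Module LinearMap

theorem LinearMap.exists_nsmul_mem_range_of_injective {M : Type*} [AddCommGroup M] [Module ℤ M]
    [Module.Free ℤ M] [Module.Finite ℤ M] {f : M →ₗ[ℤ] M} (hf : Function.Injective f) :
    ∃ n : ℕ, n ≠ 0 ∧ ∀ x, n • x ∈ LinearMap.range f := by
  let e : M ≃ₗ[ℤ] (Fin (finrank ℤ M) → ℤ) := (Module.finBasis ℤ M).equivFun
  have hindex : ((LinearMap.range f).map (e : M →ₗ[ℤ] _)).toAddSubgroup.index ≠ 0 :=
    Int.submodule_toAddSubgroup_index_ne_zero_iff.mpr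
      ⟨(e.submoduleMap _).symm ≪≫ₗ (LinearEquiv.ofInjective f hf).symm ≪≫ₗ e⟩
  rw [Submodule.map_toAddSubgroup, AddSubgroup.index_map_of_bijective e.bijective] at hindex
  exact ⟨_, hindex, (LinearMap.range f).toAddSubgroup.nsmul_index_mem⟩

theorem nondegenerate_innerₗ (F : Type*) [NormedAddCommGroup F] [InnerProductSpace ℝ F] :
    (innerₗ F).Nondegenerate :=
  ⟨fun x hx => inner_self_eq_zero.mp (hx x), fun y hy => inner_self_eq_zero.mp (hy y)⟩

section Lattice

variable {d : ℕ} {Γ : AddSubgroup (Euc d)} {R : Euc d ≃ₗᵢ[ℝ] Euc d}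

theorem mem_Scal_iff {α : ℝ} : α ∈ Scal Γ R ↔ ∀ x ∈ Γ, α • R x ∈ Γ :=
  AddSubgroup.map_le_iff_le_comap

theorem IsDen.unique {δ δ' : ℝ} (h : IsDen Γ R δ) (h' : IsDen Γ R δ') : δ = δ' :=
  le_antisymm (h.2.2 δ' h'.1 h'.2.1) (h'.2.2 δ h.1 h.2.1)

theorem mem_Scal_dualLattice_of_mem_Scal_inv {α : ℝ} (h : α ∈ Scal Γ R⁻¹) :
    α ∈ Scal (dualLattice Γ) R := by
  refine mem_Scal_iff.mpr fun x hx y hy => ?_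
  obtain ⟨n, hn⟩ := hx _ (mem_Scal_iff.mp h y hy)
  refine ⟨n, ?_⟩
  rw [← hn, real_inner_smul_left, real_inner_smul_right, LinearIsometryEquiv.coe_inv,
    ← R.inner_map_map x, R.apply_symm_apply]

theorem dualLattice_eq_dualSubmodule (N : Submodule ℤ (Euc d)) :
    dualLattice N.toAddSubgroup = (BilinForm.dualSubmodule (innerₗ (Euc d)) N).toAddSubgroup := by
  ext x
  refine forall₂_congr fun y _ => ?_
  rw [Submodule.mem_one]
  exact ⟨fun ⟨n, hn⟩ => ⟨n, hn.symm⟩, fun ⟨n, hn⟩ => ⟨n, hn.symm⟩⟩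

theorem IsLattice.dualLattice_dualLattice (hΓ : IsLattice Γ) : dualLattice (dualLattice Γ) = Γ := by
  obtain ⟨b, rfl⟩ := hΓ
  rw [dualLattice_eq_dualSubmodule, dualLattice_eq_dualSubmodule,
    BilinForm.dualSubmodule_dualSubmodule_of_basis _ (nondegenerate_innerₗ _)
      (BilinForm.isSymm_iff.mpr isSymm_inner) b]

theorem IsLattice.Scal_dualLattice (hΓ : IsLattice Γ) (R : Euc d ≃ₗᵢ[ℝ] Euc d) :
    Scal (dualLattice Γ) R = Scal Γ R⁻¹ := by
  refine Set.ext fun α => ⟨fun h => ?_, mem_Scal_dualLattice_of_mem_Scal_inv⟩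
  rw [← inv_inv R] at h
  simpa only [hΓ.dualLattice_dualLattice] using mem_Scal_dualLattice_of_mem_Scal_inv h

theorem IsLattice.inv_mem_OSset (hΓ : IsLattice Γ) (hR : R ∈ OSset Γ) : R⁻¹ ∈ OSset Γ := by
  obtain ⟨α, hα, hαR⟩ := hR
  obtain ⟨b, rfl⟩ := hΓ
  have := Module.Free.of_basis (b.restrictScalars ℤ)
  have := Module.Finite.of_basis (b.restrictScalars ℤ)
  let f : Submodule.span ℤ (Set.range b) →ₗ[ℤ] Submodule.span ℤ (Set.range b) :=
    ((α • R.toLinearMap).restrictScalars ℤ).restrict fun x hx => mem_Scal_iff.mp hαR x hx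
  have hf : Function.Injective f := fun x y hxy =>
    Subtype.ext (R.injective (smul_right_injective _ hα.ne' (congrArg Subtype.val hxy)))
  obtain ⟨n, hn, hnf⟩ := f.exists_nsmul_mem_range_of_injective hf
  refine ⟨n / α, by positivity, mem_Scal_iff.mpr fun x hx => ?_⟩
  obtain ⟨y, hy⟩ := hnf ⟨x, hx⟩
  have hxy : α • R y = (n : ℝ) • x := by
    rw [Nat.cast_smul_eq_nsmul]
    exact congrArg Subtype.val hy
  have hx_eq : (n / α : ℝ) • R⁻¹ x = y :=
    calc (n / α : ℝ) • R⁻¹ x = α⁻¹ • R.symm ((n : ℝ) • x) := by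
          rw [map_smul, smul_smul, div_eq_inv_mul, LinearIsometryEquiv.coe_inv]
      _ = y := by rw [← hxy, map_smul, R.symm_apply_apply, inv_smul_smul₀ hα.ne']
  exact hx_eq ▸ y.2

theorem IsLattice.OSset_dualLattice (hΓ : IsLattice Γ) : OSset (dualLattice Γ) = OSset Γ := by
  ext R
  change (∃ α, 0 < α ∧ α ∈ Scal _ R) ↔ R ∈ OSset Γ
  rw [hΓ.Scal_dualLattice]
  exact ⟨fun h => inv_inv R ▸ hΓ.inv_mem_OSset h, hΓ.inv_mem_OSset⟩

end Lattice

theorem OSset_dual_and_scal_dual {d : ℕ} (Γ : AddSubgroup (Euc d)) (hΓ : IsLattice Γ) :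
    OSset (dualLattice Γ) = OSset Γ ∧
    (∀ R ∈ OSset Γ, Scal (dualLattice Γ) R = Scal Γ R⁻¹) ∧
    (∀ R ∈ OSset Γ, ∀ δ δ' : ℝ,
      IsDen (dualLattice Γ) R δ → IsDen Γ R⁻¹ δ' → δ = δ') := by
  refine ⟨hΓ.OSset_dualLattice, fun R _ => hΓ.Scal_dualLattice R, fun R _ δ δ' hδ hδ' => ?_⟩
  rw [IsDen, hΓ.Scal_dualLattice] at hδ
  exact IsDen.unique hδ hδ'
end
end
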